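/- Suppose there exists a sequence ⟨f_m : m < ω⟩ of functions from ω₁ to ω₁ such that for every cofinal subset B ⊆ ω₁ there exists m < ω with f_m[B] = ω₁. Then there exists a sequence ⟨g_n : n < ω⟩ of functions from ω₁ to ω₁ such that for every uncountable pairwise disjoint family ℬ ⊆ [ω₁]^{<ω} of nonempty finite subsets of ω₁ there are infinitely many n < ω such that for every γ < ω₁ there is b ∈ ℬ with g_n[b] = {γ}. -/

import Mathlib

/-!
Since `ω₁ ≤ 𝔠`, points of `ω₁` can be coded by binary sequences, and finitely many of them are
already told apart by a finite initial segment of their codes. Hence countably many functions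
`φ_k : ω₁ → ω₁` suffice to collapse every finite set `b` to its minimum: a function that reads
off the first `M` bits of `α` and returns the `n`-th element of a fixed enumeration of `[0, α]`
is determined by the finite table `bits ↦ n`. Given `ℬ`, a single `φ_k` collapses uncountably
many members of `ℬ`; their minima are distinct by disjointness, so they form an uncountable,
hence cofinal, set, which some `f_m` maps onto `ω₁`. Then `g = f_m ∘ φ_k` is constant with
value `γ` on some member of `ℬ`, for every `γ`, and `g` is listed infinitely often.
-/

noncomputable section

open Cardinal Set Ordinal

/-- The set of countable ordinals, as a type of order type `ω₁`. -/
abbrev Omega1 : Type := Ordinal.ToType (Ordinal.omega 1)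

instance : Nonempty Omega1 :=
  Ordinal.toType_nonempty_iff_ne_zero.2
    (Ordinal.omega0_pos.trans Ordinal.omega0_lt_omega_one).ne'

/-- Proposition (M): there is a nonmeager set of reals of cardinality `ℵ₁`. -/
def PropM : Prop := ∃ X : Set ℝ, #X = Cardinal.aleph 1 ∧ ¬ IsMeagre X

open Function

theorem exists_not_countable_fiber {X C : Type*} [Countable C] {S : Set X}
    (hS : ¬ S.Countable) (κ : X → C) : ∃ c, ¬ {x ∈ S | κ x = c}.Countable := by
  by_contra! h
  refine hS ((countable_iUnion h).mono fun x hx => ?_)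
  exact mem_iUnion_of_mem (κ x) ⟨hx, rfl⟩

theorem exists_le_mem_of_not_countable {X : Type*} [LinearOrder X]
    (hIic : ∀ α : X, (Iic α).Countable) {B : Set X} (hB : ¬ B.Countable) (α : X) :
    ∃ β ∈ B, α ≤ β := by
  by_contra! h
  exact hB ((hIic α).mono fun β hβ => (h β hβ).le)

theorem exists_seq_infinite_setOf_eq {α : Type*} (u : ℕ → ℕ → α) :
    ∃ w : ℕ → α, ∀ m k, {n | w n = u m k}.Infinite := by
  refine ⟨fun n => u n.unpair.1.unpair.1 n.unpair.1.unpair.2, fun m k => ?_⟩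
  refine infinite_of_injective_forall_mem (f := fun j => Nat.pair (Nat.pair m k) j) ?_ ?_
  · intro i j h
    exact (Nat.pair_eq_pair.mp h).2
  · intro j
    simp

theorem exists_injOn_restrict_fin {X : Type*} {x : X → ℕ → Bool} (hx : Injective x)
    (b : Finset X) : ∃ M : ℕ, InjOn (fun α (i : Fin M) => x α i) b := by
  have hsep : ∀ p ∈ b ×ˢ b, ∀ᶠ M in Filter.atTop, p.1 ≠ p.2 → ∃ j < M, x p.1 j ≠ x p.2 j := by
    rintro ⟨α, β⟩ -
    by_cases h : α = β
    · simp [h]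
    obtain ⟨j, hj⟩ := ne_iff.mp (hx.ne h)
    filter_upwards [Filter.eventually_gt_atTop j] with M hM _ using ⟨j, hM, hj⟩
  obtain ⟨M, hM⟩ := ((Filter.eventually_all_finset _).mpr hsep).exists
  refine ⟨M, fun α hα β hβ heq => by_contra fun hne => ?_⟩
  obtain ⟨j, hj, hne'⟩ := hM (α, β) (Finset.mem_product.mpr ⟨hα, hβ⟩) hne
  exact hne' (congrFun heq ⟨j, hj⟩)

theorem exists_seq_eqOn_finset {X Y : Type*} [Countable Y] [Nonempty Y] {x : X → ℕ → Bool}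
    (hx : Injective x) :
    ∃ c : ℕ → X → Y, ∀ (b : Finset X) (v : X → Y), ∃ k, ∀ α ∈ b, c k α = v α := by
  have : Nonempty (Σ M : ℕ, (Fin M → Bool) → Y) := ⟨⟨0, fun _ => Classical.arbitrary Y⟩⟩
  obtain ⟨e, he⟩ := exists_surjective_nat (Σ M : ℕ, (Fin M → Bool) → Y)
  refine ⟨fun k α => (e k).2 fun i => x α i, fun b v => ?_⟩
  obtain ⟨M, hM⟩ := exists_injOn_restrict_fin hx b
  have hinj : Injective fun α : b => fun i : Fin M => x α i :=
    fun α β h => Subtype.ext (hM α.2 β.2 h)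
  let F : (Fin M → Bool) → Y := extend (fun α : b => fun i : Fin M => x α i) (fun α => v α)
    fun _ => Classical.arbitrary Y
  obtain ⟨k, hk⟩ := he ⟨M, F⟩
  refine ⟨k, fun α hα => ?_⟩
  dsimp only
  rw [hk]
  exact hinj.extend_apply (fun α : b => v α) (fun _ => Classical.arbitrary Y) ⟨α, hα⟩

theorem exists_seq_collapse_finset_to_lowerBound {X : Type*} [Preorder X]
    (hIic : ∀ α : X, (Iic α).Countable) {x : X → ℕ → Bool} (hx : Injective x) :
    ∃ φ : ℕ → X → X, ∀ (b : Finset X) (c : X), c ∈ lowerBounds (b : Set X) →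
      ∃ k, ∀ α ∈ b, φ k α = c := by
  choose s hs using fun α : X =>
    have : Nonempty X := ⟨α⟩
    countable_iff_exists_subset_range.mp (hIic α)
  obtain ⟨c, hc⟩ := exists_seq_eqOn_finset (Y := ℕ) hx
  refine ⟨fun k α => s α (c k α), fun b γ hγ => ?_⟩
  obtain ⟨k, hk⟩ := hc b fun α => invFun (s α) γ
  exact ⟨k, fun α hα => by dsimp only; rw [hk α hα]; exact invFun_eq (hs α (hγ hα))⟩

theorem exists_image_eq_singleton_of_image_eq_univ {X Y : Type*} [LinearOrder X]
    (hIic : ∀ α : X, (Iic α).Countable) {f : ℕ → X → Y}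
    (hf : ∀ B : Set X, (∀ α : X, ∃ β ∈ B, α ≤ β) → ∃ m, f m '' B = Set.univ) {φ : ℕ → X → X}
    (hφ : ∀ (b : Finset X) (c : X), c ∈ lowerBounds (b : Set X) → ∃ k, ∀ α ∈ b, φ k α = c)
    {ℬ : Set (Finset X)} (hℬ : ¬ ℬ.Countable) (hdisj : ℬ.PairwiseDisjoint id)
    (hne : ∀ b ∈ ℬ, b.Nonempty) :
    ∃ m k, ∀ γ : Y, ∃ b ∈ ℬ, (f m ∘ φ k) '' b = {γ} := by
  have hcollapse : ∀ b ∈ ℬ, ∃ k, ∃ c ∈ b, ∀ α ∈ b, φ k α = c := fun b hb =>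
    let ⟨k, hk⟩ := hφ b _ fun _ hα => b.min'_le _ hα
    ⟨k, _, b.min'_mem (hne b hb), hk⟩
  obtain ⟨b₀, hb₀⟩ : ℬ.Nonempty := nonempty_iff_ne_empty.mpr fun h => hℬ (h ▸ countable_empty)
  have : Nonempty X := let ⟨a, _⟩ := hne b₀ hb₀; ⟨a⟩
  choose! κ μ hμ hκ using hcollapse
  obtain ⟨k, hk⟩ := exists_not_countable_fiber hℬ κ
  set 𝒜 := {b ∈ ℬ | κ b = k}
  have hμ𝒜 : InjOn μ 𝒜 := fun b hb b' hb' h =>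
    hdisj.elim_finset hb.1 hb'.1 _ (hμ b hb.1) (h ▸ hμ b' hb'.1)
  obtain ⟨m, hm⟩ := hf (μ '' 𝒜) <| exists_le_mem_of_not_countable hIic fun h =>
    hk (countable_of_injective_of_countable_image hμ𝒜 h)
  refine ⟨m, k, fun γ => ?_⟩
  obtain ⟨_, ⟨b, hb, rfl⟩, rfl⟩ : γ ∈ f m '' (μ '' 𝒜) := hm ▸ mem_univ γ
  refine ⟨b, hb.1, ?_⟩
  rw [← (Finset.coe_nonempty.mpr (hne b hb.1)).image_const]
  exact EqOn.image_eq fun α hα => by simp only [comp_apply, ← hb.2, hκ b hb.1 α hα]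

theorem Omega1.countable_Iic (α : Omega1) : (Iic α).Countable := by
  have hcard : #Omega1 = ℵ₁ := by rw [mk_toType, card_omega]
  have hlt : #(Iio α) < ℵ₁ := hcard ▸ mk_Iio_lt α (by rw [hcard, ord_aleph, type_toType])
  rw [← Iio_insert]
  exact (countable_coe_iff.mp (mk_le_aleph0_iff.mp (Order.lt_succ_iff.mp
    (succ_aleph0 ▸ hlt)))).insert α

theorem Omega1.exists_injective_cantor : ∃ x : Omega1 → ℕ → Bool, Injective x := by
  have h : #Omega1 ≤ #(ℕ → Bool) := by
    rw [mk_toType, card_omega, ← power_def, mk_bool, mk_nat, two_power_aleph0]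
    exact aleph_one_le_continuum
  obtain ⟨e⟩ := h
  exact ⟨e, e.injective⟩

/-- From a sequence `⟨f_m⟩` as in Sierpiński's onto-mapping principle one obtains a
sequence `⟨g_n⟩` such that for every uncountable pairwise disjoint family `ℬ` of
nonempty finite subsets of `ω₁`, for infinitely many `n`, for every `γ < ω₁` there is
`b ∈ ℬ` with `g_n[b] = {γ}`. -/
theorem statement2
    (h : ∃ f : ℕ → Omega1 → Omega1,
      ∀ B : Set Omega1, (∀ α : Omega1, ∃ β ∈ B, α ≤ β) →
        ∃ m : ℕ, f m '' B = Set.univ) :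
    ∃ g : ℕ → Omega1 → Omega1,
      ∀ ℬ : Set (Finset Omega1), ¬ ℬ.Countable →
        (∀ b ∈ ℬ, ∀ b' ∈ ℬ, b ≠ b' → Disjoint b b') →
        (∀ b ∈ ℬ, b.Nonempty) →
        {n : ℕ | ∀ γ : Omega1, ∃ b ∈ ℬ, (g n) '' ↑b = {γ}}.Infinite := by
  obtain ⟨f, hf⟩ := h
  obtain ⟨x, hx⟩ := Omega1.exists_injective_cantor
  obtain ⟨φ, hφ⟩ := exists_seq_collapse_finset_to_lowerBound Omega1.countable_Iic hx
  obtain ⟨g, hg⟩ := exists_seq_infinite_setOf_eq fun m k => f m ∘ φ k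
  refine ⟨g, fun ℬ hℬ hdisj hne => ?_⟩
  obtain ⟨m, k, hmk⟩ :=
    exists_image_eq_singleton_of_image_eq_univ Omega1.countable_Iic hf hφ hℬ hdisj hne
  exact (hg m k).mono fun n (hn : g n = f m ∘ φ k) => show ∀ γ, _ from hn ▸ hmk
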